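/- arXiv:1805.11377 — 2 statements merged into one kernel-verified Lean document; each statement's English description precedes it below -/
import Mathlib

section
/- Let f : ℝ → ℝ be 2π-periodic and continuous at a point t, and integrable on [-π,π]. Then the Abel means (1/(2π)) ∫_{-π}^{π} f(u+t) · (1 - r^2)/(1 - 2r cos u + r^2) du converge to f(t) as r → 1⁻. -/
/-!
The Poisson kernel `P_r(u) = (1 - r²) / (1 - 2 r cos u + r²)` is an approximate identity as
`r → 1⁻`: it is nonnegative, its mass over a period is `2π` (the Poisson integral formula applied
to the constant function `1`), and away from `u = 0` it is bounded by `(1 - r²) / sin² δ`, which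
tends to `0` uniformly. Mathlib's peak-function theorem then turns continuity of `f` at `t` into
convergence of the Abel means.
-/

open Real Filter MeasureTheory Set Topology

noncomputable def circlePoissonKernel (r u : ℝ) : ℝ := (1 - r ^ 2) / (1 - 2 * r * cos u + r ^ 2)

lemma norm_circleMap_sub_ofReal_sq (r θ : ℝ) :
    ‖circleMap 0 1 θ - r‖ ^ 2 = 1 - 2 * r * cos θ + r ^ 2 := by
  rw [Complex.sq_norm, Complex.normSq_apply]
  simp [circleMap, Complex.exp_ofReal_mul_I_re, Complex.exp_ofReal_mul_I_im]
  nlinarith [sin_sq_add_cos_sq θ]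

lemma circlePoissonKernel_eq_poissonKernel (r θ : ℝ) :
    circlePoissonKernel r θ = poissonKernel 0 r (circleMap 0 1 θ) := by
  simp [poissonKernel, circlePoissonKernel, norm_circleMap_sub_ofReal_sq]

lemma periodic_circlePoissonKernel (r : ℝ) :
    Function.Periodic (circlePoissonKernel r) (2 * π) :=
  fun u => by simp [circlePoissonKernel]

lemma circleAverage_poissonKernel_eq_one {c w : ℂ} {R : ℝ} (hw : w ∈ Metric.ball c R) :
    circleAverage (poissonKernel c w) c R = 1 := by
  have h := (diffContOnCl_const (c := (1 : ℂ))).circleAverage_poissonKernel_smul hw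
  rw [circleAverage_def] at h ⊢
  simp only [Pi.smul_apply', Complex.real_smul, mul_one, intervalIntegral.integral_ofReal] at h
  exact_mod_cast h

lemma integral_circlePoissonKernel {r : ℝ} (hr : |r| < 1) :
    ∫ u in (-π)..π, circlePoissonKernel r u = 2 * π := by
  have h := circleAverage_poissonKernel_eq_one (c := 0) (w := r) (R := 1) (by simpa using hr)
  simp_rw [circleAverage_def, ← circlePoissonKernel_eq_poissonKernel, smul_eq_mul,
    inv_mul_eq_one₀ two_pi_pos.ne'] at h
  have hper := (periodic_circlePoissonKernel r).intervalIntegral_add_eq (-π) 0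
  rwa [show -π + 2 * π = π by ring, zero_add, ← h] at hper

lemma one_sub_two_mul_mul_cos_add_sq_pos {r : ℝ} (hr : |r| < 1) (u : ℝ) :
    0 < 1 - 2 * r * cos u + r ^ 2 := by
  have : r * cos u ≤ |r| := (le_abs_self _).trans <| by
    rw [abs_mul]; exact mul_le_of_le_one_right (abs_nonneg r) (abs_cos_le_one u)
  nlinarith [sq_abs r, abs_nonneg r]

lemma circlePoissonKernel_nonneg {r : ℝ} (hr : |r| < 1) (u : ℝ) :
    0 ≤ circlePoissonKernel r u :=
  div_nonneg (by nlinarith [sq_abs r, abs_nonneg r]) (one_sub_two_mul_mul_cos_add_sq_pos hr u).le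

lemma continuous_circlePoissonKernel {r : ℝ} (hr : |r| < 1) :
    Continuous (circlePoissonKernel r) :=
  continuous_const.div (by fun_prop) fun u => (one_sub_two_mul_mul_cos_add_sq_pos hr u).ne'

lemma circlePoissonKernel_le_of_cos_le {r δ u : ℝ} (hr0 : 0 ≤ r) (hr1 : r < 1) (hδ : sin δ ≠ 0)
    (hu : cos u ≤ cos δ) : circlePoissonKernel r u ≤ (1 - r ^ 2) / sin δ ^ 2 := by
  refine div_le_div_of_nonneg_left (by nlinarith) (by positivity) ?_
  nlinarith [sq_nonneg (r - cos δ), sin_sq_add_cos_sq δ]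

lemma eventually_abs_lt_one_nhdsLT_one : ∀ᶠ r in 𝓝[<] (1 : ℝ), |r| < 1 := by
  filter_upwards [Ioo_mem_nhdsLT zero_lt_one] with r hr
  exact abs_lt.2 ⟨by linarith [hr.1], hr.2⟩

lemma tendstoUniformlyOn_zero_of_abs_le {ι α : Type*} {l : Filter ι} {F : ι → α → ℝ}
    {b : ι → ℝ} {s : Set α} (hb : Tendsto b l (𝓝 0)) (hF : ∀ᶠ i in l, ∀ x ∈ s, |F i x| ≤ b i) :
    TendstoUniformlyOn F 0 l s := by
  rw [Metric.tendstoUniformlyOn_iff]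
  intro ε hε
  filter_upwards [hF, hb.eventually (gt_mem_nhds hε)] with i hFi hbi x hx
  simpa [dist_eq_norm] using (hFi x hx).trans_lt hbi

lemma tendstoUniformlyOn_circlePoissonKernel {U : Set ℝ} (hU : U ∈ 𝓝 0) (c : ℝ) :
    TendstoUniformlyOn (fun r u => c * circlePoissonKernel r u) 0 (𝓝[<] 1)
      (Icc (-π) π \ U) := by
  obtain ⟨ε, hε, hball⟩ := Metric.mem_nhds_iff.1 hU
  set δ := min ε (π / 2)
  have hδ : 0 < δ := lt_min hε (by positivity)
  have hδπ : δ < π := (min_le_right _ _).trans_lt (by linarith [pi_pos])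
  have hsin : sin δ ≠ 0 := (sin_pos_of_pos_of_lt_pi hδ hδπ).ne'
  have hcos : ∀ u ∈ Icc (-π) π \ U, cos u ≤ cos δ := by
    rintro u ⟨hu, huU⟩
    have hεu : ε ≤ |u| := by
      by_contra! h
      exact huU (hball (by simpa using h))
    rw [← cos_abs u]
    exact cos_le_cos_of_nonneg_of_le_pi hδ.le (abs_le.2 hu) ((min_le_left _ _).trans hεu)
  refine tendstoUniformlyOn_zero_of_abs_le (b := fun r => |c| * ((1 - r ^ 2) / sin δ ^ 2)) ?_ ?_
  · exact ((by fun_prop : Continuous fun r : ℝ => |c| * ((1 - r ^ 2) / sin δ ^ 2)).tendsto' 1 0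
      (by simp)).mono_left nhdsWithin_le_nhds
  · filter_upwards [Ioo_mem_nhdsLT zero_lt_one, eventually_abs_lt_one_nhdsLT_one]
      with r hr hr' u hu
    rw [abs_mul, abs_of_nonneg (circlePoissonKernel_nonneg hr' u)]
    exact mul_le_mul_of_nonneg_left
      (circlePoissonKernel_le_of_cos_le hr.1.le hr.2 hsin (hcos u hu)) (abs_nonneg c)

lemma Function.Periodic.intervalIntegrable_comp_add_const {E : Type*} [NormedAddCommGroup E]
    {f : ℝ → E} {T a : ℝ} (hf : Function.Periodic f T) (hT : T ≠ 0)
    (h : IntervalIntegrable f volume a (a + T)) (c b₁ b₂ : ℝ) :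
    IntervalIntegrable (fun x => f (x + c)) volume b₁ b₂ := by
  simpa using (hf.intervalIntegrable hT h (b₁ + c) (b₂ + c)).comp_add_right c

theorem poisson_integral_tendsto_at_continuity
    (f : ℝ → ℝ) (hper : Function.Periodic f (2 * π))
    (hint : IntervalIntegrable f volume (-π) π)
    (t : ℝ) (hcont : ContinuousAt f t) :
    Filter.Tendsto
      (fun r : ℝ => (1 / (2 * π)) *
        ∫ u in (-π)..π, f (u + t) * ((1 - r ^ 2) / (1 - 2 * r * Real.cos u + r ^ 2)))
      (nhdsWithin 1 (Set.Iio 1)) (nhds (f t)) := by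
  have hπ : -π ≤ π := by linarith [pi_pos]
  have habel : ∀ r : ℝ, (1 / (2 * π)) *
      ∫ u in (-π)..π, f (u + t) * ((1 - r ^ 2) / (1 - 2 * r * Real.cos u + r ^ 2))
      = ∫ u in Ioc (-π) π, (1 / (2 * π) * circlePoissonKernel r u) • f (u + t) := fun r => by
    rw [intervalIntegral.integral_of_le hπ, ← integral_const_mul]
    simp only [circlePoissonKernel, smul_eq_mul, mul_assoc, mul_comm (f _)]
  have hshift : IntervalIntegrable (fun u => f (u + t)) volume (-π) π :=
    hper.intervalIntegrable_comp_add_const two_pi_pos.ne'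
      (by rwa [show -π + 2 * π = π by ring]) t (-π) π
  have hr := eventually_abs_lt_one_nhdsLT_one
  simp_rw [habel]
  refine tendsto_setIntegral_peak_smul_of_integrableOn_of_tendsto (x₀ := 0) measurableSet_Ioc
    measurableSet_Ioc subset_rfl self_mem_nhdsWithin measure_Ioc_lt_top.ne ?_ ?_ ?_ ?_
    ((intervalIntegrable_iff_integrableOn_Ioc_of_le hπ).1 hshift) ?_
  · filter_upwards [hr] with r hr u _
    exact mul_nonneg (by positivity) (circlePoissonKernel_nonneg hr u)
  · exact fun U hU h0U => (tendstoUniformlyOn_circlePoissonKernel (hU.mem_nhds h0U) _).mono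
      (sdiff_subset_sdiff_left Ioc_subset_Icc_self)
  · refine tendsto_const_nhds.congr' ?_
    filter_upwards [hr] with r hr
    rw [integral_const_mul, ← intervalIntegral.integral_of_le hπ, integral_circlePoissonKernel hr]
    field_simp
  · filter_upwards [hr] with r hr
    exact ((continuous_circlePoissonKernel hr).const_mul _).aestronglyMeasurable
  · exact (hcont.tendsto.comp ((continuous_add_const t).tendsto' 0 t (zero_add t))).mono_left
      nhdsWithin_le_nhds
end

section
/- Let f : ℝ → ℝ be continuous and 2π-periodic with Fourier coefficients a_0, a_k, b_k, and let 0 < α < π/2. Then for all t, a_0/2 + Σ_{k=1}^∞ (sinc(kα/2))^2 (a_k cos(kt) + b_k sin(kt)) = (1/α^2) ∫_{-α}^{α} f(t+u)(α - |u|) du. -/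
/-!
The combination `a k * cos (k t) + b k * sin (k t)` is `(1/π) ∫_{-π}^{π} f (t + v) cos (k v) dv`, so,
exchanging sum and integral (the weights `sinc² (k α / 2)` are `O(1/k²)`), the series becomes
`(1/π) ∫ f (t + v) K v dv` with `K v = ∑_{k ≥ 1} sinc² (k α / 2) cos (k v)`. Since
`sinc² (x / 2) cos y = (2 cos y - cos (y + x) - cos (y - x)) / x²`, the kernel `K` is a second
difference of `∑ cos (k y) / k² = y² / 4 - π y / 2 + π² / 6` (`0 ≤ y ≤ 2π`), and on `|v| ≤ π` that
second difference is `π / α² * max (α - |v|) 0 - 1 / 2`.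
-/

open Real

noncomputable def sinc (x : ℝ) : ℝ := if x = 0 then 1 else Real.sin x / x

open Set Function MeasureTheory

lemma hasSum_cos_mul_div_sq {y : ℝ} (hy0 : 0 ≤ y) (hy : y ≤ 2 * π) :
    HasSum (fun k : ℕ => cos ((k + 1) * y) / (k + 1) ^ 2)
      (y ^ 2 / 4 - π * y / 2 + π ^ 2 / 6) := by
  have hx : y / (2 * π) ∈ Icc (0 : ℝ) 1 :=
    ⟨by positivity, (div_le_one (by positivity)).mpr hy⟩
  have H := (hasSum_nat_add_iff' 1).mpr (hasSum_one_div_nat_pow_mul_cos one_ne_zero hx)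
  norm_num [Polynomial.bernoulli, Finset.sum_range_succ, bernoulli, Nat.factorial] at H
  have hval : (2 * π) ^ 2 / 2 / 2 * ((y / (2 * π)) ^ 2 + -(y / (2 * π)) + 1 / 6) =
      y ^ 2 / 4 - π * y / 2 + π ^ 2 / 6 := by
    field_simp
    ring
  rw [← hval]
  refine H.congr_fun fun k => ?_
  rw [mul_div_assoc', mul_assoc, mul_div_cancel_left₀ _ (by positivity), inv_mul_eq_div]

lemma hasSum_cos_mul_div_sq_of_abs_le {y : ℝ} (hy : |y| ≤ 2 * π) :
    HasSum (fun k : ℕ => cos ((k + 1) * y) / (k + 1) ^ 2)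
      (|y| ^ 2 / 4 - π * |y| / 2 + π ^ 2 / 6) := by
  rcases abs_choice y with h | h <;> rw [h] at hy ⊢
  · exact hasSum_cos_mul_div_sq (h ▸ abs_nonneg y) hy
  · simpa only [mul_neg, cos_neg] using hasSum_cos_mul_div_sq (h ▸ abs_nonneg y) hy

lemma sinc_sq_half_mul_cos {x : ℝ} (hx : x ≠ 0) (y : ℝ) :
    _root_.sinc (x / 2) ^ 2 * cos y = (2 * cos y - cos (y + x) - cos (y - x)) / x ^ 2 := by
  have hsin : sin (x / 2) ^ 2 = (1 - cos x) / 2 := by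
    have := cos_sq (x / 2)
    rw [mul_div_cancel₀ x two_ne_zero] at this
    linarith [sin_sq_add_cos_sq (x / 2)]
  rw [_root_.sinc, if_neg (by positivity), div_pow, hsin, cos_add, cos_sub]
  field_simp
  ring

lemma sinc_sq_le {x : ℝ} (hx : x ≠ 0) : _root_.sinc x ^ 2 ≤ 1 / x ^ 2 := by
  rw [_root_.sinc, if_neg hx, div_pow]
  exact div_le_div_of_nonneg_right (sin_sq_le_one x) (sq_nonneg x)

lemma abs_sinc_sq_mul_cos_le {x : ℝ} (hx : x ≠ 0) (y : ℝ) :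
    |_root_.sinc x ^ 2 * cos y| ≤ 1 / x ^ 2 := by
  rw [abs_mul, abs_sq, ← mul_one (1 / x ^ 2)]
  exact mul_le_mul (sinc_sq_le hx) (abs_cos_le_one y) (abs_nonneg _) (by positivity)

noncomputable def tent (α v : ℝ) : ℝ := max (α - |v|) 0

@[fun_prop]
lemma continuous_tent (α : ℝ) : Continuous (tent α) :=
  (continuous_const.sub continuous_abs).max continuous_const

lemma support_tent_subset (α : ℝ) : support (tent α) ⊆ Ioo (-α) α := by
  intro v hv
  have : |v| < α := by
    by_contra! h
    exact hv (max_eq_right (by linarith))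
  exact abs_lt.mp this

lemma tent_of_abs_le {α v : ℝ} (hv : |v| ≤ α) : tent α v = α - |v| :=
  max_eq_left (by linarith)

lemma abs_add_add_abs_sub_eq {α : ℝ} (hα : 0 ≤ α) (v : ℝ) :
    |v + α| + |v - α| = 2 * (|v| + tent α v) := by
  rw [tent]
  rcases le_total 0 (α - |v|) with h | h <;>
    simp only [max_eq_left, max_eq_right, h] <;>
    rcases abs_cases (v + α) with ⟨h1, _⟩ | ⟨h1, _⟩ <;>
    rcases abs_cases (v - α) with ⟨h2, _⟩ | ⟨h2, _⟩ <;>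
    rcases abs_cases v with ⟨h3, _⟩ | ⟨h3, _⟩ <;> linarith

lemma hasSum_sinc_sq_mul_cos {α v : ℝ} (hα0 : 0 < α) (hαπ : α ≤ π) (hv : |v| ≤ π) :
    HasSum (fun k : ℕ => _root_.sinc ((k + 1) * α / 2) ^ 2 * cos ((k + 1) * v))
      (π / α ^ 2 * tent α v - 1 / 2) := by
  have hv' := abs_le.mp hv
  have hadd : |v + α| ≤ 2 * π := abs_le.mpr ⟨by linarith, by linarith⟩
  have hsub : |v - α| ≤ 2 * π := abs_le.mpr ⟨by linarith, by linarith⟩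
  have H := ((((hasSum_cos_mul_div_sq_of_abs_le (y := v) (by linarith)).mul_left 2).sub
    (hasSum_cos_mul_div_sq_of_abs_le hadd)).sub
    (hasSum_cos_mul_div_sq_of_abs_le hsub)).div_const (α ^ 2)
  have hnum : 2 * (|v| ^ 2 / 4 - π * |v| / 2 + π ^ 2 / 6)
      - (|v + α| ^ 2 / 4 - π * |v + α| / 2 + π ^ 2 / 6)
      - (|v - α| ^ 2 / 4 - π * |v - α| / 2 + π ^ 2 / 6) = π * tent α v - α ^ 2 / 2 := by
    rw [sq_abs, sq_abs, sq_abs]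
    linear_combination (π / 2) * abs_add_add_abs_sub_eq hα0.le v
  rw [show π / α ^ 2 * tent α v - 1 / 2 = (π * tent α v - α ^ 2 / 2) / α ^ 2 by field_simp,
    ← hnum]
  refine H.congr_fun fun k => ?_
  rw [sinc_sq_half_mul_cos (by positivity)]
  field_simp

lemma integral_mul_tent_eq {g : ℝ → ℝ} {α c : ℝ} (hα : 0 ≤ α) (hαc : α ≤ c) :
    ∫ v in (-c)..c, g v * tent α v = ∫ v in (-α)..α, g v * (α - |v|) := by
  have hsupp : ∀ d, α ≤ d → support (fun v => g v * tent α v) ⊆ Ioc (-d) d := fun d hd =>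
    (support_mul_subset_right _ _).trans <| (support_tent_subset α).trans <|
      Ioo_subset_Ioc_self.trans (Ioc_subset_Ioc (by linarith) hd)
  rw [intervalIntegral.integral_eq_integral_of_support_subset (hsupp c hαc),
    ← intervalIntegral.integral_eq_integral_of_support_subset (hsupp α le_rfl)]
  refine intervalIntegral.integral_congr fun v hv => ?_
  rw [uIcc_of_le (by linarith)] at hv
  rw [tent_of_abs_le (abs_le.mpr hv)]

lemma integral_mul_tent_kernel {g : ℝ → ℝ} (hg : Continuous g) {α : ℝ} (hα : 0 ≤ α)
    (hαπ : α ≤ π) :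
    ∫ v in (-π)..π, g v * (π / α ^ 2 * tent α v - 1 / 2) =
      π / α ^ 2 * (∫ v in (-α)..α, g v * (α - |v|)) - 1 / 2 * ∫ v in (-π)..π, g v := by
  rw [← integral_mul_tent_eq hα hαπ, ← intervalIntegral.integral_const_mul,
    ← intervalIntegral.integral_const_mul, ← intervalIntegral.integral_sub]
  · exact intervalIntegral.integral_congr fun v _ => by ring
  all_goals exact Continuous.intervalIntegrable (by fun_prop) _ _

lemma Function.Periodic.intervalIntegral_comp_add_left {E : Type*} [NormedAddCommGroup E]
    [NormedSpace ℝ E] {g : ℝ → E} {T : ℝ} (hg : Periodic g T) (s t : ℝ) :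
    ∫ v in s..s + T, g (t + v) = ∫ v in s..s + T, g v := by
  rw [intervalIntegral.integral_comp_add_left g t, ← add_assoc]
  exact hg.intervalIntegral_add_eq (t + s) s

lemma integral_comp_add_left_mul_cos {f : ℝ → ℝ} (hf : Continuous f) (hper : Periodic f (2 * π))
    (k : ℕ) (t : ℝ) :
    ∫ v in (-π)..π, f (t + v) * cos (k * v) =
      (∫ u in (-π)..π, f u * cos (k * u)) * cos (k * t) +
        (∫ u in (-π)..π, f u * sin (k * u)) * sin (k * t) := by
  have hg : Periodic (fun u => f u * cos (k * (u - t))) (2 * π) := fun u => by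
    simp only [hper u, add_sub_right_comm, mul_add, cos_add_nat_mul_two_pi]
  have hshift := hg.intervalIntegral_comp_add_left (-π) t
  simp only [add_sub_cancel_left, show -π + 2 * π = π by ring] at hshift
  rw [hshift, ← intervalIntegral.integral_mul_const, ← intervalIntegral.integral_mul_const,
    ← intervalIntegral.integral_add]
  · refine intervalIntegral.integral_congr fun u _ => ?_
    simp only [mul_sub, cos_sub]
    ring
  all_goals exact ((hf.mul (by fun_prop)).mul continuous_const).intervalIntegrable _ _

lemma hasSum_intervalIntegral_mul {g : ℝ → ℝ} {a b : ℝ} (hg : IntervalIntegrable g volume a b)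
    {φ : ℕ → ℝ → ℝ} {S : ℝ → ℝ} {C : ℕ → ℝ} (hφ : ∀ n, Continuous (φ n)) (hC : Summable C)
    (hφC : ∀ n x, |φ n x| ≤ C n) (hS : ∀ x ∈ uIoc a b, HasSum (fun n => φ n x) (S x)) :
    HasSum (fun n => ∫ x in a..b, g x * φ n x) (∫ x in a..b, g x * S x) := by
  refine intervalIntegral.hasSum_integral_of_dominated_convergence (fun n x => C n * |g x|)
    (fun n => hg.def'.aestronglyMeasurable.mul (hφ n).aestronglyMeasurable)
    (fun n => .of_forall fun x _ => ?_) (.of_forall fun x _ => hC.mul_right _) ?_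
    (.of_forall fun x hx => (hS x hx).mul_left (g x))
  · rw [norm_mul, Real.norm_eq_abs, Real.norm_eq_abs, mul_comm]
    exact mul_le_mul_of_nonneg_right (hφC n x) (abs_nonneg _)
  · simp only [tsum_mul_right]
    exact hg.abs.const_mul _

lemma summable_one_div_nat_succ_mul_sq {c : ℝ} :
    Summable fun k : ℕ => 1 / ((k + 1) * c) ^ 2 := by
  have h := (summable_nat_add_iff 1).mpr (Real.summable_one_div_nat_pow.mpr one_lt_two)
  refine (h.mul_right (1 / c ^ 2)).congr fun k => ?_
  push_cast
  rw [mul_pow, one_div_mul_one_div]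

theorem sigma_two_sum_eq_hat_convolution
    (f : ℝ → ℝ) (hf : Continuous f) (hper : Function.Periodic f (2 * π))
    (a b : ℕ → ℝ)
    (ha : ∀ k : ℕ, a k = (1 / π) * ∫ u in (-π)..π, f u * Real.cos (k * u))
    (hb : ∀ k : ℕ, b k = (1 / π) * ∫ u in (-π)..π, f u * Real.sin (k * u))
    (α : ℝ) (hα0 : 0 < α) (hαπ : α < π / 2) (t : ℝ) :
    HasSum (fun k : ℕ =>
        (_root_.sinc ((k + 1) * α / 2)) ^ 2 *
          (a (k + 1) * Real.cos ((k + 1) * t) + b (k + 1) * Real.sin ((k + 1) * t)))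
      ((1 / α ^ 2) * (∫ u in (-α)..α, f (t + u) * (α - |u|)) - a 0 / 2) := by
  have hπ := pi_pos
  have hft : Continuous fun v => f (t + v) := hf.comp (continuous_const_add t)
  have hcoef : ∀ k : ℕ, a k * cos (k * t) + b k * sin (k * t) =
      (1 / π) * ∫ v in (-π)..π, f (t + v) * cos (k * v) := fun k => by
    rw [ha, hb, integral_comp_add_left_mul_cos hf hper]
    ring
  have ha0 : a 0 = (1 / π) * ∫ v in (-π)..π, f (t + v) := by simpa using hcoef 0
  have hbound : ∀ (k : ℕ) (v : ℝ),
      |_root_.sinc ((k + 1) * α / 2) ^ 2 * cos ((k + 1) * v)| ≤ 1 / ((k + 1) * (α / 2)) ^ 2 :=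
    fun k v => by simpa only [mul_div_assoc] using abs_sinc_sq_mul_cos_le (by positivity) _
  have hsum := (hasSum_intervalIntegral_mul (hft.intervalIntegrable (-π) π) (by fun_prop)
    summable_one_div_nat_succ_mul_sq hbound fun v hv => by
      rw [uIoc_of_le (by linarith)] at hv
      exact hasSum_sinc_sq_mul_cos hα0 (by linarith) (abs_le.mpr ⟨hv.1.le, hv.2⟩)).mul_left (1 / π)
  have hval : (1 / α ^ 2) * (∫ u in (-α)..α, f (t + u) * (α - |u|)) - a 0 / 2 =
      (1 / π) * ∫ v in (-π)..π, f (t + v) * (π / α ^ 2 * tent α v - 1 / 2) := by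
    rw [integral_mul_tent_kernel hft hα0.le (by linarith), ha0]
    field_simp
  rw [hval]
  refine hsum.congr_fun fun k => ?_
  have hk := hcoef (k + 1)
  push_cast at hk
  rw [hk, mul_left_comm, ← intervalIntegral.integral_const_mul]
  exact congrArg _ (intervalIntegral.integral_congr fun v _ => by ring)
end
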